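/- arXiv:2402.10309 — 8 statements merged into one kernel-verified Lean document; each statement's English description precedes it below -/
import Mathlib

section
/- Let the reward r be corrected with a backward transition probability P_B, i.e. for every complete trajectory τ = (s_0, …, s_T, s_f): Σ_{t=0}^{T} r(s_t, s_{t+1}) = −E(s_T) + α Σ_{t=0}^{T−1} log P_B(s_t|s_{t+1}). If Q and V satisfy the soft Bellman optimality equations, then the terminating state distribution of the associated optimal policy satisfies π*(x) = exp(−E(x)/α) / exp(V(s_0)/α) for every terminating state x ∈ X; in particular π*(x) is proportional to exp(−E(x)/α). -/
/-- Product of `f` over consecutive pairs of a list: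
for `l = [v₀, …, v_k]`, `pairProd f l = ∏_{t=0}^{k-1} f v_t v_{t+1}`. -/
def pairProd {V : Type*} (f : V → V → ℝ) (l : List V) : ℝ :=
  ((l.zip l.tail).map (fun p => f p.1 p.2)).prod

/-- Sum of `f` over consecutive pairs of a list. -/
def pairSum {V : Type*} (f : V → V → ℝ) (l : List V) : ℝ :=
  ((l.zip l.tail).map (fun p => f p.1 p.2)).sum

/-- `l` is a directed path from `a` to `b` in the graph with edge relation `E`. -/
def IsPath {V : Type*} (E : V → V → Prop) (a b : V) (l : List V) : Prop :=
  l.Chain' E ∧ l.head? = some a ∧ l.getLast? = some b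

section Aux
variable {V : Type*}

lemma pairProd_nil (f : V → V → ℝ) : pairProd f [] = 1 := rfl
lemma pairProd_singleton (f : V → V → ℝ) (a : V) : pairProd f [a] = 1 := rfl
lemma pairSum_singleton (f : V → V → ℝ) (a : V) : pairSum f [a] = 0 := rfl

lemma pairProd_cons_cons (f : V → V → ℝ) (a b : V) (t : List V) :
    pairProd f (a :: b :: t) = f a b * pairProd f (b :: t) := rfl

lemma pairSum_cons_cons (f : V → V → ℝ) (a b : V) (t : List V) :
    pairSum f (a :: b :: t) = f a b + pairSum f (b :: t) := rfl

lemma pairProd_concat (f : V → V → ℝ) :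
    ∀ (l : List V) (u v : V), l.getLast? = some u →
      pairProd f (l ++ [v]) = pairProd f l * f u v
  | [], u, v, h => by simp at h
  | [a], u, v, h => by
      simp only [List.getLast?_singleton, Option.some.injEq] at h
      subst h
      simp [pairProd_cons_cons, pairProd_singleton]
  | a :: b :: t, u, v, h => by
      rw [List.getLast?_cons_cons] at h
      have h1 : pairProd f ((a :: b :: t) ++ [v]) = f a b * pairProd f ((b :: t) ++ [v]) := rfl
      rw [h1, pairProd_concat f (b :: t) u v h, pairProd_cons_cons]
      ring

lemma chain'_pairs {E : V → V → Prop} :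
    ∀ {l : List V}, l.Chain' E → ∀ p ∈ l.zip l.tail, E p.1 p.2
  | [], _, p, hp => by simp at hp
  | [a], _, p, hp => by simp at hp
  | a :: b :: t, h, p, hp => by
      replace h := List.isChain_cons_cons.1 h
      have : (a :: b :: t).zip (a :: b :: t).tail = (a, b) :: ((b :: t).zip t) := rfl
      rw [this, List.mem_cons] at hp
      rcases hp with hp | hp
      · subst hp; exact h.1
      · exact chain'_pairs h.2 p hp

lemma mem_zip_tail {l : List V} {p : V × V} (hp : p ∈ l.zip l.tail) :
    p.2 ∈ l := List.mem_of_mem_tail (List.of_mem_zip hp).2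

lemma chain'_reflTransGen_getLast {E : V → V → Prop} :
    ∀ {l : List V} {a x : V}, l.Chain' E → a ∈ l → l.getLast? = some x →
      Relation.ReflTransGen E a x
  | [], a, x, _, ha, _ => by simp at ha
  | [b], a, x, _, ha, hx => by
      simp only [List.mem_singleton] at ha
      simp only [List.getLast?_singleton, Option.some.injEq] at hx
      subst ha; subst hx; exact Relation.ReflTransGen.refl
  | b :: c :: t, a, x, h, ha, hx => by
      replace h := List.isChain_cons_cons.1 h
      rw [List.getLast?_cons_cons] at hx
      rcases List.mem_cons.1 ha with rfl | ha
      · exact Relation.ReflTransGen.head h.1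
          (chain'_reflTransGen_getLast h.2 List.mem_cons_self hx)
      · exact chain'_reflTransGen_getLast h.2 ha hx

lemma chain_transGen {E : V → V → Prop} :
    ∀ {a : V} {t : List V}, List.Chain E a t → ∀ b ∈ t, Relation.TransGen E a b
  | _, [], _, b, hb => by simp at hb
  | a, c :: s, h, b, hb => by
      replace h : E a c ∧ List.Chain E c s := List.isChain_cons_cons.1 h
      rcases List.mem_cons.1 hb with rfl | hb
      · exact Relation.TransGen.single h.1
      · exact Relation.TransGen.head h.1 (chain_transGen h.2 b hb)

lemma chain'_nodup {E : V → V → Prop} (hacyc : ∀ v : V, ¬ Relation.TransGen E v v) :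
    ∀ {l : List V}, l.Chain' E → l.Nodup
  | [], _ => List.nodup_nil
  | a :: t, h => by
      have hch : List.Chain E a t := h
      refine List.nodup_cons.2 ⟨?_, chain'_nodup hacyc (List.IsChain.tail h)⟩
      intro hmem
      exact hacyc a (chain_transGen hch a hmem)

lemma isPath_finite {E : V → V → Prop} [Fintype V]
    (hacyc : ∀ v : V, ¬ Relation.TransGen E v v) (a b : V) :
    {l : List V | IsPath E a b l}.Finite := by
  apply (List.finite_length_le V (Fintype.card V)).subset
  intro l hl
  exact List.Nodup.length_le_card (chain'_nodup hacyc hl.1)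

lemma isPath_concat {E : V → V → Prop} {a u v : V} {l : List V}
    (hl : IsPath E a u l) (huv : E u v) : IsPath E a v (l ++ [v]) := by
  obtain ⟨hc, hh, hg⟩ := hl
  have hne : l ≠ [] := by rintro rfl; simp at hh
  refine ⟨?_, ?_, ?_⟩
  · apply List.isChain_append.2
    refine ⟨hc, List.isChain_singleton v, ?_⟩
    intro x hx y hy
    simp only [List.head?_cons, Option.mem_def, Option.some.injEq] at hy
    rw [hg] at hx
    simp only [Option.mem_def, Option.some.injEq] at hx
    subst hx; subst hy; exact huv
  · rwa [List.head?_append_of_ne_nil _ hne]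
  · exact List.getLast?_concat

lemma isPath_cases {E : V → V → Prop} {a v : V} {l : List V}
    (hl : IsPath E a v l) :
    (l = [v] ∧ a = v) ∨ ∃ u l', E u v ∧ IsPath E a u l' ∧ l = l' ++ [v] := by
  obtain ⟨hc, hh, hg⟩ := hl
  have hne : l ≠ [] := by rintro rfl; simp at hh
  have hlast : l.getLast hne = v := by
    rw [List.getLast?_eq_getLast hne, Option.some.injEq] at hg
    exact hg
  have hdec : l.dropLast ++ [v] = l := by rw [← hlast]; exact List.dropLast_append_getLast hne
  by_cases hdl : l.dropLast = []
  · left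
    rw [hdl] at hdec
    simp only [List.nil_append] at hdec
    subst hdec
    simp only [List.head?_cons, Option.some.injEq] at hh
    exact ⟨rfl, hh.symm⟩
  · right
    have hclast := hc
    rw [← hdec] at hclast
    replace hclast := List.isChain_append.1 hclast
    obtain ⟨hc1, _, hrel⟩ := hclast
    set u := l.dropLast.getLast hdl with hu
    have hulast : l.dropLast.getLast? = some u := List.getLast?_eq_getLast hdl
    refine ⟨u, l.dropLast, ?_, ⟨hc1, ?_, hulast⟩, hdec.symm⟩
    · exact hrel u hulast v rfl
    · rw [← hdec, List.head?_append_of_ne_nil _ hdl] at hh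
      exact hh

lemma isPath_self {E : V → V → Prop} {a : V} {l : List V}
    (hnoin : ∀ v : V, ¬ E v a) (hl : IsPath E a a l) : l = [a] := by
  rcases isPath_cases hl with ⟨h, _⟩ | ⟨u, l', huv, _, _⟩
  · exact h
  · exact absurd huv (hnoin u)

lemma pairProd_exp_pairSum (f : V → V → ℝ) :
    ∀ (l : List V), pairProd (fun a b => Real.exp (f a b)) l = Real.exp (pairSum f l)
  | [] => by simp [pairProd, pairSum]
  | [a] => by simp [pairProd_singleton, pairSum_singleton]
  | a :: b :: t => by
      rw [pairProd_cons_cons, pairSum_cons_cons, Real.exp_add,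
        pairProd_exp_pairSum f (b :: t)]

lemma exp_pairSum_log {PB : V → V → ℝ} :
    ∀ {l : List V}, (∀ p ∈ l.zip l.tail, 0 < PB p.1 p.2) →
      Real.exp (pairSum (fun a b => Real.log (PB a b)) l) = pairProd PB l
  | [], _ => by simp [pairProd, pairSum]
  | [a], _ => by simp [pairProd_singleton, pairSum_singleton]
  | a :: b :: t, h => by
      have hab : 0 < PB a b := h (a, b) (by
        show (a, b) ∈ (a, b) :: ((b :: t).zip t); exact List.mem_cons_self)
      have ht : ∀ p ∈ (b :: t).zip t, 0 < PB p.1 p.2 := fun p hp => h p (by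
        show p ∈ (a, b) :: ((b :: t).zip t); exact List.mem_cons_of_mem _ hp)
      rw [pairSum_cons_cons, pairProd_cons_cons, Real.exp_add, Real.exp_log hab,
        exp_pairSum_log ht]

lemma pairSum_congr {f g : V → V → ℝ} {l : List V}
    (h : ∀ p ∈ l.zip l.tail, f p.1 p.2 = g p.1 p.2) : pairSum f l = pairSum g l := by
  unfold pairSum
  exact congrArg List.sum (List.map_congr_left h)

lemma pairSum_telescope (g : V → ℝ) :
    ∀ {l : List V} {a x : V}, l.head? = some a → l.getLast? = some x →
      pairSum (fun s t => g t - g s) l = g x - g a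
  | [], a, x, hh, _ => by simp at hh
  | [b], a, x, hh, hg => by
      simp only [List.head?_cons, Option.some.injEq] at hh
      simp only [List.getLast?_singleton, Option.some.injEq] at hg
      subst hh; subst hg; simp [pairSum_singleton]
  | b :: c :: t, a, x, hh, hg => by
      simp only [List.head?_cons, Option.some.injEq] at hh
      rw [List.getLast?_cons_cons] at hg
      subst hh
      rw [pairSum_cons_cons, pairSum_telescope g (l := c :: t) rfl hg]
      ring

lemma pairSum_div (f : V → V → ℝ) (c : ℝ) :
    ∀ (l : List V), pairSum (fun a b => f a b / c) l = pairSum f l / c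
  | [] => by simp [pairSum]
  | [a] => by simp [pairSum_singleton]
  | a :: b :: t => by
      rw [pairSum_cons_cons, pairSum_cons_cons, pairSum_div f c (b :: t)]
      ring

lemma pairSum_add (f g : V → V → ℝ) :
    ∀ (l : List V), pairSum (fun a b => f a b + g a b) l = pairSum f l + pairSum g l
  | [] => by simp [pairSum]
  | [a] => by simp [pairSum_singleton]
  | a :: b :: t => by
      rw [pairSum_cons_cons, pairSum_cons_cons, pairSum_cons_cons,
        pairSum_add f g (b :: t)]
      ring

end Aux

lemma sum_paths_pairProd {V : Type*} [Fintype V] [DecidableEq V]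
    (E : V → V → Prop) [DecidableRel E] (s0 sf : V)
    (hacyc : ∀ v : V, ¬ Relation.TransGen E v v)
    (hsink : ∀ v : V, ¬ E sf v)
    (hnoin : ∀ v : V, ¬ E v s0)
    (PB : V → V → ℝ)
    (hPBsum : ∀ s' : V, s' ≠ sf → s' ≠ s0 →
      ∑ s ∈ Finset.univ.filter (fun s => E s s'), PB s s' = 1) :
    ∀ v : V, v ≠ sf →
      ∑ l ∈ (isPath_finite hacyc s0 v).toFinset, pairProd PB l = 1 := by
  have hwfT : WellFounded (Relation.TransGen E) := by
    have h1 : IsIrrefl V (Relation.TransGen E) := ⟨hacyc⟩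
    have h2 : IsTrans V (Relation.TransGen E) := ⟨fun _ _ _ => Relation.TransGen.trans⟩
    exact Finite.wellFounded_of_trans_of_irrefl _
  have hwf : WellFounded (fun a b : V => E a b) :=
    Subrelation.wf (fun {a b} h => Relation.TransGen.single h) hwfT
  intro v
  induction v using hwf.induction with
  | _ v ih =>
  intro hvsf
  by_cases hvs0 : v = s0
  · rw [hvs0]
    have hset : (isPath_finite hacyc s0 s0).toFinset = {[s0]} := by
      ext l
      rw [Set.Finite.mem_toFinset, Finset.mem_singleton]
      constructor
      · intro hl; exact isPath_self hnoin hl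
      · rintro rfl
        exact ⟨List.isChain_singleton s0, rfl, rfl⟩
    rw [hset, Finset.sum_singleton, pairProd_singleton]
  · have hset : (isPath_finite hacyc s0 v).toFinset =
        (Finset.univ.filter (fun u => E u v)).biUnion
          (fun u => ((isPath_finite hacyc s0 u).toFinset).image (fun l => l ++ [v])) := by
      ext l
      rw [Set.Finite.mem_toFinset, Finset.mem_biUnion]
      constructor
      · intro hl
        rcases isPath_cases hl with ⟨_, ha⟩ | ⟨u, l', huv, hl', rfl⟩
        · exact absurd ha.symm hvs0
        · refine ⟨u, Finset.mem_filter.2 ⟨Finset.mem_univ u, huv⟩, ?_⟩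
          exact Finset.mem_image.2 ⟨l', (Set.Finite.mem_toFinset _).2 hl', rfl⟩
      · rintro ⟨u, hu, hl⟩
        obtain ⟨l', hl', rfl⟩ := Finset.mem_image.1 hl
        rw [Set.Finite.mem_toFinset] at hl'
        exact isPath_concat hl' (Finset.mem_filter.1 hu).2
    have hdisj : ∀ u₁ ∈ Finset.univ.filter (fun u => E u v),
        ∀ u₂ ∈ Finset.univ.filter (fun u => E u v), u₁ ≠ u₂ →
        Disjoint (((isPath_finite hacyc s0 u₁).toFinset).image (fun l => l ++ [v]))
          (((isPath_finite hacyc s0 u₂).toFinset).image (fun l => l ++ [v])) := by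
      intro u₁ _ u₂ _ hne
      rw [Finset.disjoint_left]
      intro l hl1 hl2
      obtain ⟨l₁, hl₁, h1⟩ := Finset.mem_image.1 hl1
      obtain ⟨l₂, hl₂, h2⟩ := Finset.mem_image.1 hl2
      have : l₁ = l₂ := by
        have := h1.trans h2.symm
        simpa using this
      subst this
      rw [Set.Finite.mem_toFinset] at hl₁ hl₂
      have g1 := hl₁.2.2
      have g2 := hl₂.2.2
      rw [g1, Option.some.injEq] at g2
      exact hne g2
    rw [hset, Finset.sum_biUnion hdisj]
    have hterm : ∀ u ∈ Finset.univ.filter (fun u => E u v),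
        (∑ l ∈ ((isPath_finite hacyc s0 u).toFinset).image (fun l => l ++ [v]),
          pairProd PB l) = PB u v := by
      intro u hu
      have huv := (Finset.mem_filter.1 hu).2
      have husf : u ≠ sf := by rintro rfl; exact hsink v huv
      rw [Finset.sum_image (by intro a _ b _ h; simpa using h)]
      have : ∀ l ∈ (isPath_finite hacyc s0 u).toFinset,
          pairProd PB (l ++ [v]) = pairProd PB l * PB u v := by
        intro l hl
        rw [Set.Finite.mem_toFinset] at hl
        exact pairProd_concat PB l u v hl.2.2
      rw [Finset.sum_congr rfl this, ← Finset.sum_mul, ih u huv husf, one_mul]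
    rw [Finset.sum_congr rfl hterm]
    exact hPBsum v hvsf hvs0


/-- In a soft MDP whose reward is corrected with a backward transition
probability `P_B`, if `Q` and `V` satisfy the soft Bellman optimality equations, then the
terminating state distribution of the optimal policy `π*(s'|s) = exp((Q(s,s') - V(s))/α)`
satisfies `π*(x) = exp(-E(x)/α) / exp(V(s₀)/α)` for every terminating state `x`. -/
theorem maxent_rl_unbiased
    {V : Type*} [Fintype V] [DecidableEq V]
    (E : V → V → Prop) [DecidableRel E] (s0 sf : V)
    -- soft MDP: finite DAG, sink `sf`, everything reachable from `s0`, `s0` has no parents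
    (hacyc : ∀ v : V, ¬ Relation.TransGen E v v)
    (hsink : ∀ v : V, ¬ E sf v)
    (hreach : ∀ v : V, Relation.ReflTransGen E s0 v)
    (hnoin : ∀ v : V, ¬ E v s0)
    (hs0f : s0 ≠ sf)
    (α : ℝ) (hα : 0 < α)
    (En : V → ℝ) (r : V → V → ℝ)
    -- backward transition probability
    (PB : V → V → ℝ)
    (hPBpos : ∀ s s' : V, E s s' → s' ≠ sf → 0 < PB s s')
    (hPBsum : ∀ s' : V, s' ≠ sf → s' ≠ s0 →
      ∑ s ∈ Finset.univ.filter (fun s => E s s'), PB s s' = 1)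
    -- reward corrected with `P_B`: for every complete trajectory (s0, …, s_T = x, sf),
    -- Σ_t r(s_t, s_{t+1}) = -E(x) + α Σ_{t<T} log P_B(s_t | s_{t+1})
    (hcorr : ∀ (x : V) (l : List V), E x sf → IsPath E s0 x l →
      pairSum r l + r x sf = -En x + α * pairSum (fun a b => Real.log (PB a b)) l)
    -- soft Bellman optimality equations
    (Q : V → V → ℝ) (Vf : V → ℝ)
    (hQ : ∀ s s' : V, E s s' → Q s s' = r s s' + Vf s')
    (hV : ∀ s : V, s ≠ sf →
      Vf s = α * Real.log (∑ t ∈ Finset.univ.filter (fun t => E s t), Real.exp (Q s t / α)))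
    (hVsf : Vf sf = 0) :
    ∀ x : V, E x sf →
      (∑ᶠ l ∈ {l : List V | IsPath E s0 x l},
        pairProd (fun s s' => Real.exp ((Q s s' - Vf s) / α)) l *
          Real.exp ((Q x sf - Vf x) / α))
      = Real.exp (-En x / α) / Real.exp (Vf s0 / α) := by
  intro x hx
  have hxsf : x ≠ sf := by rintro rfl; exact hacyc _ (Relation.TransGen.single hx)
  have hfin := isPath_finite (E := E) hacyc s0 x
  rw [← Set.Finite.coe_toFinset hfin, finsum_mem_coe_finset]
  have hterm : ∀ l ∈ hfin.toFinset,
      pairProd (fun s s' => Real.exp ((Q s s' - Vf s) / α)) l *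
          Real.exp ((Q x sf - Vf x) / α)
        = (Real.exp (-En x / α) / Real.exp (Vf s0 / α)) * pairProd PB l := by
    intro l hl
    rw [Set.Finite.mem_toFinset] at hl
    have hedges := chain'_pairs hl.1
    have hpos : ∀ p ∈ l.zip l.tail, 0 < PB p.1 p.2 := by
      intro p hp
      refine hPBpos _ _ (hedges p hp) ?_
      intro heq
      have hrt := chain'_reflTransGen_getLast hl.1 (mem_zip_tail hp) hl.2.2
      rw [heq] at hrt
      rcases Relation.ReflTransGen.cases_head hrt with h | ⟨c, hc, -⟩
      · exact hxsf h.symm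
      · exact hsink c hc
    have h1 : pairSum (fun s s' => Q s s' - Vf s) l = pairSum r l + (Vf x - Vf s0) := by
      have e1 : pairSum (fun s s' => Q s s' - Vf s) l
          = pairSum (fun s s' => r s s' + (Vf s' - Vf s)) l := by
        apply pairSum_congr
        intro p hp
        rw [hQ p.1 p.2 (hedges p hp)]; ring
      rw [e1, pairSum_add, pairSum_telescope Vf hl.2.1 hl.2.2]
    have h2 : pairSum (fun s s' => (Q s s' - Vf s) / α) l
        = (pairSum r l + (Vf x - Vf s0)) / α := by
      rw [pairSum_div, h1]
    rw [pairProd_exp_pairSum (fun s s' => (Q s s' - Vf s) / α) l, h2, ← Real.exp_add]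
    have hc := hcorr x l hx hl
    have hQx : Q x sf = r x sf := by rw [hQ x sf hx, hVsf, add_zero]
    have harg : (pairSum r l + (Vf x - Vf s0)) / α + (Q x sf - Vf x) / α
        = -En x / α - Vf s0 / α + pairSum (fun a b => Real.log (PB a b)) l := by
      have hα' : α ≠ 0 := ne_of_gt hα
      rw [hQx, ← add_div]
      have hnum : pairSum r l + (Vf x - Vf s0) + (r x sf - Vf x)
          = -En x + α * pairSum (fun a b => Real.log (PB a b)) l - Vf s0 := by linarith [hc]
      rw [hnum]
      field_simp
      ring
    rw [harg, Real.exp_add, Real.exp_sub, exp_pairSum_log hpos]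
  rw [Finset.sum_congr rfl hterm, ← Finset.mul_sum,
    sum_paths_pairProd E s0 sf hacyc hsink hnoin PB hPBsum x hxsf, mul_one]
end

section
/- Suppose the reward is uncorrected, i.e. for every complete trajectory τ = (s_0, …, s_T, s_f): Σ_{t=0}^{T} r(s_t, s_{t+1}) = −E(s_T), and suppose that every terminating state x ∈ X is reached by exactly one directed path from s_0 in G (as is the case when G restricted to S is a tree rooted at s_0). If Q and V satisfy the soft Bellman optimality equations, then the terminating state distribution of the associated optimal policy satisfies π*(x) = exp(−E(x)/α) / exp(V(s_0)/α), hence π*(x) ∝ exp(−E(x)/α). -/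
/-- With the uncorrected reward, if every terminating state is reached by
exactly one directed path from `s₀` (e.g. when the graph restricted to `S` is a tree rooted
at `s₀`), then the terminating state distribution of the optimal MaxEnt policy satisfies
`π*(x) = exp(-E(x)/α) / exp(V(s₀)/α)`, hence `π*(x) ∝ exp(-E(x)/α)`. -/
theorem uncorrected_tree_terminating_distribution
    {V : Type*} [Fintype V] [DecidableEq V]
    (E : V → V → Prop) [DecidableRel E] (s0 sf : V)
    (hacyc : ∀ v : V, ¬ Relation.TransGen E v v)
    (hsink : ∀ v : V, ¬ E sf v)
    (hreach : ∀ v : V, Relation.ReflTransGen E s0 v)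
    (hnoin : ∀ v : V, ¬ E v s0)
    (hs0f : s0 ≠ sf)
    (α : ℝ) (hα : 0 < α)
    (En : V → ℝ) (r : V → V → ℝ)
    (huncorr : ∀ (x : V) (l : List V), E x sf → IsPath E s0 x l →
      pairSum r l + r x sf = -En x)
    -- every terminating state is reached by exactly one directed path from `s₀`
    (hunique : ∀ x : V, E x sf → ∃! l : List V, IsPath E s0 x l)
    (Q : V → V → ℝ) (Vf : V → ℝ)
    (hQ : ∀ s s' : V, E s s' → Q s s' = r s s' + Vf s')
    (hV : ∀ s : V, s ≠ sf →
      Vf s = α * Real.log (∑ t ∈ Finset.univ.filter (fun t => E s t), Real.exp (Q s t / α)))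
    (hVsf : Vf sf = 0) :
    ∀ x : V, E x sf →
      (∑ᶠ l ∈ {l : List V | IsPath E s0 x l},
        pairProd (fun s s' => Real.exp ((Q s s' - Vf s) / α)) l *
          Real.exp ((Q x sf - Vf x) / α))
      = Real.exp (-En x / α) / Real.exp (Vf s0 / α) := by
  have key : ∀ (l : List V) (a b : V), l.Chain' E → l.head? = some a →
      l.getLast? = some b →
      pairProd (fun s s' => Real.exp ((Q s s' - Vf s) / α)) l
        = Real.exp ((pairSum r l + Vf b - Vf a) / α) := by
    intro l
    induction l with
    | nil => intro a b _ h; simp at h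
    | cons c t ih =>
      intro a b hch hh hl
      have hca : c = a := by simpa using hh
      subst hca
      match t, hch, hl with
      | [], _, hl =>
        have : c = b := by simpa using hl
        subst this
        simp [pairProd, pairSum]
      | d :: t', hch, hl =>
        have hE : E c d := (List.isChain_cons_cons.mp hch).1
        have hch' : (d :: t').Chain' E := (List.isChain_cons_cons.mp hch).2
        have hl' : (d :: t').getLast? = some b := by
          rw [← hl]; simp [List.getLast?_cons_cons]
        have ihd := ih d b hch' rfl hl'
        have hprod : pairProd (fun s s' => Real.exp ((Q s s' - Vf s) / α)) (c :: d :: t')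
            = Real.exp ((Q c d - Vf c) / α) *
              pairProd (fun s s' => Real.exp ((Q s s' - Vf s) / α)) (d :: t') := by
          simp [pairProd]
        have hsum : pairSum r (c :: d :: t') = r c d + pairSum r (d :: t') := by
          simp [pairSum]
        rw [hprod, ihd, ← Real.exp_add, hsum, hQ c d hE]
        ring_nf
  intro x hx
  obtain ⟨l, hl, huniq⟩ := hunique x hx
  have hset : {l' : List V | IsPath E s0 x l'} = {l} := by
    ext l'
    simp only [Set.mem_setOf_eq, Set.mem_singleton_iff]
    exact ⟨fun h => huniq l' h, fun h => h ▸ hl⟩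
  rw [hset, finsum_mem_singleton]
  obtain ⟨hch, hh, hlast⟩ := hl
  rw [key l s0 x hch hh hlast, ← Real.exp_add, hQ x sf hx, hVsf, ← Real.exp_sub]
  congr 1
  have h := huncorr x l hx ⟨hch, hh, hlast⟩
  rw [← add_div, ← sub_div]
  congr 1
  linarith
end

section
/- For every partial trajectory τ = (s_m, s_{m+1}, …, s_n) whose endpoint s_n lies in S (i.e. s_n ≠ s_f), the Path Consistency Learning residual equals α times the Subtrajectory Balance residual: Δ_PCL(τ) = α Δ_SubTB(τ), under the identifications π_θ(s'|s) = P_F(s'|s) and V(s) = α log F(s). -/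
/-!
A path that ends in `S` never passes through `s_f`, because `s_f` has no outgoing edges. Hence
every reward along it is `α log P_B`, and both sides are the same sum once the logarithms of the
products of `F`, `P_B` and `P_F` are expanded into sums of logarithms.
-/

section PairSum

variable {V : Type*}

lemma pairSum_sub (f g : V → V → ℝ) (l : List V) :
    pairSum (fun s s' => f s s' - g s s') l = pairSum f l - pairSum g l := by
  simp only [pairSum, eq_sub_iff_add_eq, ← List.sum_map_add, sub_add_cancel]

lemma pairSum_const_mul (c : ℝ) (f : V → V → ℝ) (l : List V) :
    pairSum (fun s s' => c * f s s') l = c * pairSum f l := by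
  simp only [pairSum, List.sum_map_mul_left]

lemma log_pairProd {f : V → V → ℝ} {l : List V} (h : ∀ p ∈ l.zip l.tail, f p.1 p.2 ≠ 0) :
    Real.log (pairProd f l) = pairSum (fun s s' => Real.log (f s s')) l := by
  rw [pairProd, Real.log_list_prod (List.forall_mem_map.2 h), pairSum, List.map_map]
  rfl

lemma pairProd_ne_zero {f : V → V → ℝ} {l : List V} (h : ∀ p ∈ l.zip l.tail, f p.1 p.2 ≠ 0) :
    pairProd f l ≠ 0 :=
  List.prod_ne_zero fun h0 => by
    obtain ⟨p, hp, hp0⟩ := List.mem_map.1 h0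
    exact h p hp hp0

end PairSum

lemma List.IsChain.rel_of_mem_zip_tail {α : Type*} {R : α → α → Prop} {l : List α}
    (hl : l.IsChain R) {p : α × α} (hp : p ∈ l.zip l.tail) : R p.1 p.2 := by
  induction l using List.twoStepInduction with
  | nil => simp at hp
  | singleton => simp at hp
  | cons_cons a b t _ ih_cons =>
    obtain ⟨hab, hbt⟩ := List.isChain_cons_cons.1 hl
    rcases List.mem_cons.1 hp with rfl | hp
    · exact hab
    · exact ih_cons b hbt hp

lemma List.IsChain.forall_ne_of_getLast? {α : Type*} {E : α → α → Prop} {sf b : α}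
    (hsink : ∀ v, ¬ E sf v) (hb : b ≠ sf) {l : List α} (hl : l.IsChain E)
    (hlast : l.getLast? = some b) : ∀ v ∈ l, v ≠ sf := by
  induction l with
  | nil => simp at hlast
  | cons a t ih =>
    cases t with
    | nil =>
      simp only [List.getLast?_singleton, Option.some.injEq] at hlast
      simpa [hlast] using hb
    | cons c t =>
      obtain ⟨hac, hct⟩ := List.isChain_cons_cons.1 hl
      have hne_a : a ≠ sf := by
        rintro rfl
        exact hsink c hac
      rw [List.getLast?_cons_cons] at hlast
      simpa [hne_a] using ih hct hlast

theorem pcl_residual_eq_subtb_residual_general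
    {V : Type*}
    (E : V → V → Prop) (sf : V)
    (hsink : ∀ v : V, ¬ E sf v)
    (α : ℝ)
    (PB : V → V → ℝ)
    (hPBpos : ∀ s s' : V, E s s' → s' ≠ sf → 0 < PB s s')
    (PF : V → V → ℝ) (hPFpos : ∀ s s' : V, E s s' → 0 < PF s s')
    (F : V → ℝ) (hFpos : ∀ s : V, s ≠ sf → 0 < F s)
    -- sparse corrected reward
    (r : V → V → ℝ)
    (hr : ∀ s s' : V, E s s' → s' ≠ sf → r s s' = α * Real.log (PB s s'))
    -- identifications π_θ = P_F and V(s) = α log F(s), V(s_f) = 0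
    (Vf : V → ℝ)
    (hVf : ∀ s : V, s ≠ sf → Vf s = α * Real.log (F s)) :
    ∀ (a b : V) (l : List V), IsPath E a b l → b ≠ sf →
      -- Δ_PCL(τ) = α · Δ_SubTB(τ)
      -Vf a + Vf b + pairSum (fun s s' => r s s' - α * Real.log (PF s s')) l
        = α * (Real.log (F b * pairProd PB l) - Real.log (F a * pairProd PF l)) := by
  rintro a b l ⟨hchain, hhead, hlast⟩ hb
  have hne : ∀ v ∈ l, v ≠ sf := hchain.forall_ne_of_getLast? hsink hb hlast
  have hedge : ∀ p ∈ l.zip l.tail, E p.1 p.2 ∧ p.2 ≠ sf := fun p hp =>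
    ⟨hchain.rel_of_mem_zip_tail hp,
      hne _ (List.mem_of_mem_tail (List.of_mem_zip hp).2)⟩
  have hPB : ∀ p ∈ l.zip l.tail, PB p.1 p.2 ≠ 0 := fun p hp =>
    (hPBpos _ _ (hedge p hp).1 (hedge p hp).2).ne'
  have hPF : ∀ p ∈ l.zip l.tail, PF p.1 p.2 ≠ 0 := fun p hp =>
    (hPFpos _ _ (hedge p hp).1).ne'
  have ha : a ≠ sf := hne a (List.mem_of_mem_head? hhead)
  have hreward : pairSum (fun s s' => r s s' - α * Real.log (PF s s')) l
      = pairSum (fun s s' => α * Real.log (PB s s') - α * Real.log (PF s s')) l :=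
    pairSum_congr fun p hp => by rw [hr _ _ (hedge p hp).1 (hedge p hp).2]
  rw [hreward, pairSum_sub, pairSum_const_mul, pairSum_const_mul, hVf a ha, hVf b hb,
    Real.log_mul (hFpos b hb).ne' (pairProd_ne_zero hPB),
    Real.log_mul (hFpos a ha).ne' (pairProd_ne_zero hPF), log_pairProd hPB, log_pairProd hPF]
  ring

/-- On a soft MDP with the sparse corrected reward
`r(s,s') = α log P_B(s|s')`, `r(x,s_f) = -E(x)`, for every partial trajectory
`τ = (s_m, …, s_n)` with `s_n ≠ s_f`, the PCL residual equals `α` times the SubTB residual,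
under the identifications `π_θ(s'|s) = P_F(s'|s)` and `V(s) = α log F(s)`. -/
theorem pcl_residual_eq_subtb_residual
    {V : Type*} [Fintype V] [DecidableEq V]
    (E : V → V → Prop) [DecidableRel E] (s0 sf : V)
    (hacyc : ∀ v : V, ¬ Relation.TransGen E v v)
    (hsink : ∀ v : V, ¬ E sf v)
    (hreach : ∀ v : V, Relation.ReflTransGen E s0 v)
    (α : ℝ) (hα : 0 < α)
    (En : V → ℝ)
    (PB : V → V → ℝ)
    (hPBpos : ∀ s s' : V, E s s' → s' ≠ sf → 0 < PB s s')
    (hPBsum : ∀ s' : V, s' ≠ sf → s' ≠ s0 →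
      ∑ s ∈ Finset.univ.filter (fun s => E s s'), PB s s' = 1)
    (PF : V → V → ℝ) (hPFpos : ∀ s s' : V, E s s' → 0 < PF s s')
    (F : V → ℝ) (hFpos : ∀ s : V, s ≠ sf → 0 < F s)
    -- sparse corrected reward
    (r : V → V → ℝ)
    (hr : ∀ s s' : V, E s s' → s' ≠ sf → r s s' = α * Real.log (PB s s'))
    (hrf : ∀ x : V, E x sf → r x sf = -En x)
    -- identifications π_θ = P_F and V(s) = α log F(s), V(s_f) = 0
    (Vf : V → ℝ)
    (hVf : ∀ s : V, s ≠ sf → Vf s = α * Real.log (F s))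
    (hVsf : Vf sf = 0) :
    ∀ (a b : V) (l : List V), IsPath E a b l → b ≠ sf →
      -- Δ_PCL(τ) = α · Δ_SubTB(τ)
      -Vf a + Vf b + pairSum (fun s s' => r s s' - α * Real.log (PF s s')) l
        = α * (Real.log (F b * pairProd PB l) - Real.log (F a * pairProd PF l)) :=
  pcl_residual_eq_subtb_residual_general E sf hsink α PB hPBpos PF hPFpos F hFpos r hr Vf hVf
end

section
/- For every partial trajectory τ = (s_m, s_{m+1}, …, s_{n−1}, s_f) ending at the terminal state s_f, the Path Consistency Learning residual equals α times the boundary form of the Subtrajectory Balance residual: Δ_PCL(τ) = α [log(exp(−E(s_{n−1})/α) ∏_{t=m}^{n−2} P_B(s_t|s_{t+1})) − log(F(s_m) ∏_{t=m}^{n−1} P_F(s_{t+1}|s_t))], under the identifications π_θ(s'|s) = P_F(s'|s) and V(s) = α log F(s), V(s_f) = 0. In particular, for complete trajectories (s_m = s_0) this yields the equivalence between PCL and the Trajectory Balance residual. -/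
lemma all_ne_sf {V : Type*} (E : V → V → Prop) (sf : V) (hsink : ∀ v, ¬ E sf v) :
    ∀ (l : List V) (x : V), l.Chain' E → l.getLast? = some x → x ≠ sf →
      ∀ v ∈ l, v ≠ sf := by
  intro l
  induction l with
  | nil => simp
  | cons a t ih =>
    intro x hch hlast hx v hv
    cases t with
    | nil =>
      simp only [List.getLast?_singleton, Option.some_inj] at hlast
      simp only [List.mem_singleton] at hv
      subst hlast; subst hv; exact hx
    | cons b t' =>
      rcases List.isChain_cons_cons.mp hch with ⟨hab, hch'⟩
      have hlast' : (b::t').getLast? = some x := by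
        simpa [List.getLast?_cons_cons] using hlast
      rcases List.mem_cons.mp hv with hv | hv
      · subst hv; intro h; subst h; exact hsink b hab
      · exact ih x hch' hlast' hx v hv

lemma pair_aux {V : Type*} (E : V → V → Prop) (sf : V) (α : ℝ)
    (r PB PF : V → V → ℝ)
    (hPBpos : ∀ s s', E s s' → s' ≠ sf → 0 < PB s s')
    (hPFpos : ∀ s s', E s s' → 0 < PF s s')
    (hr : ∀ s s', E s s' → s' ≠ sf → r s s' = α * Real.log (PB s s')) :
    ∀ l : List V, l.Chain' E → (∀ v ∈ l, v ≠ sf) →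
      0 < pairProd PB l ∧ 0 < pairProd PF l ∧
      pairSum (fun s s' => r s s' - α * Real.log (PF s s')) l
        = α * (Real.log (pairProd PB l) - Real.log (pairProd PF l)) := by
  intro l
  induction l with
  | nil => simp [pairProd, pairSum]
  | cons a t ih =>
    intro hch hne
    cases t with
    | nil => simp [pairProd, pairSum]
    | cons b t' =>
      rcases List.isChain_cons_cons.mp hch with ⟨hab, hch'⟩
      have hne' : ∀ v ∈ b::t', v ≠ sf := fun v hv => hne v (List.mem_cons_of_mem a hv)
      obtain ⟨hPB, hPF, hsum⟩ := ih hch' hne'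
      have hb : b ≠ sf := hne' b List.mem_cons_self
      have h1 : 0 < PB a b := hPBpos a b hab hb
      have h2 : 0 < PF a b := hPFpos a b hab
      have ePB : pairProd PB (a::b::t') = PB a b * pairProd PB (b::t') := by
        simp [pairProd]
      have ePF : pairProd PF (a::b::t') = PF a b * pairProd PF (b::t') := by
        simp [pairProd]
      have eS : pairSum (fun s s' => r s s' - α * Real.log (PF s s')) (a::b::t')
          = (r a b - α * Real.log (PF a b))
            + pairSum (fun s s' => r s s' - α * Real.log (PF s s')) (b::t') := by
        simp [pairSum]
      refine ⟨by rw [ePB]; exact mul_pos h1 hPB,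
              by rw [ePF]; exact mul_pos h2 hPF, ?_⟩
      rw [eS, hsum, ePB, ePF, Real.log_mul (ne_of_gt h1) (ne_of_gt hPB),
        Real.log_mul (ne_of_gt h2) (ne_of_gt hPF), hr a b hab hb]
      ring

/-- On a soft MDP with the sparse corrected reward, for every partial
trajectory `τ = (s_m, …, s_{n-1}, s_f)` ending at the terminal state, the PCL residual
equals `α` times the boundary form of the SubTB residual (which for `s_m = s₀` is the
Trajectory Balance residual), under `π_θ = P_F`, `V(s) = α log F(s)`, `V(s_f) = 0`.
Here the trajectory is encoded as a path `l` from `a = s_m` to `x = s_{n-1}` followed by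
the terminal transition `x → s_f`. -/
theorem pcl_residual_eq_subtb_residual_terminal
    {V : Type*} [Fintype V] [DecidableEq V]
    (E : V → V → Prop) [DecidableRel E] (s0 sf : V)
    (hacyc : ∀ v : V, ¬ Relation.TransGen E v v)
    (hsink : ∀ v : V, ¬ E sf v)
    (hreach : ∀ v : V, Relation.ReflTransGen E s0 v)
    (α : ℝ) (hα : 0 < α)
    (En : V → ℝ)
    (PB : V → V → ℝ)
    (hPBpos : ∀ s s' : V, E s s' → s' ≠ sf → 0 < PB s s')
    (hPBsum : ∀ s' : V, s' ≠ sf → s' ≠ s0 →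
      ∑ s ∈ Finset.univ.filter (fun s => E s s'), PB s s' = 1)
    (PF : V → V → ℝ) (hPFpos : ∀ s s' : V, E s s' → 0 < PF s s')
    (F : V → ℝ) (hFpos : ∀ s : V, s ≠ sf → 0 < F s)
    (r : V → V → ℝ)
    (hr : ∀ s s' : V, E s s' → s' ≠ sf → r s s' = α * Real.log (PB s s'))
    (hrf : ∀ x : V, E x sf → r x sf = -En x)
    (Vf : V → ℝ)
    (hVf : ∀ s : V, s ≠ sf → Vf s = α * Real.log (F s))
    (hVsf : Vf sf = 0) :
    ∀ (a x : V) (l : List V), IsPath E a x l → E x sf →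
      -- Δ_PCL(τ) over the full trajectory l ++ [s_f] …
      -Vf a + Vf sf
          + pairSum (fun s s' => r s s' - α * Real.log (PF s s')) l
          + (r x sf - α * Real.log (PF x sf))
        -- … equals α times the boundary SubTB residual
        = α * (Real.log (Real.exp (-En x / α) * pairProd PB l)
            - Real.log (F a * (pairProd PF l * PF x sf))) := by
  intro a x l hpath hxsf
  obtain ⟨hch, hhead, hlast⟩ := hpath
  have hx : x ≠ sf := by rintro rfl; exact hsink _ hxsf
  have hne : ∀ v ∈ l, v ≠ sf := all_ne_sf E sf hsink l x hch hlast hx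
  have ha : a ≠ sf := hne a (List.mem_of_mem_head? (by simp [hhead]))
  obtain ⟨hPB, hPF, hsum⟩ := pair_aux E sf α r PB PF hPBpos hPFpos hr l hch hne
  have haF : 0 < F a := hFpos a ha
  have hPFx : 0 < PF x sf := hPFpos x sf hxsf
  rw [hsum, hVf a ha, hVsf, hrf x hxsf,
    Real.log_mul (Real.exp_ne_zero _) (ne_of_gt hPB), Real.log_exp,
    Real.log_mul (ne_of_gt haF) (ne_of_gt (mul_pos hPF hPFx)),
    Real.log_mul (ne_of_gt hPF) (ne_of_gt hPFx)]
  field_simp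
  ring
end

section
/- For every edge s → s' of G with s' ∈ S, the Soft Q-Learning residual equals α times the Detailed Balance residual: Q(s, s') − (r(s, s') + V_Q(s')) = α [log(F(s) P_F(s'|s)) − log(F(s') P_B(s|s'))], where F(s) = Σ_{s'' ∈ Ch(s)} exp(Q(s, s'')/α) and P_F(s'|s) = exp(Q(s, s')/α)/F(s). -/
/-- The flow induced by a soft Q-function:
`F(s) = Σ_{s'' ∈ Ch(s)} exp(Q(s,s'')/α)`. -/
noncomputable def Fq {V : Type*} [Fintype V] (E : V → V → Prop) [DecidableRel E]
    (α : ℝ) (Q : V → V → ℝ) (s : V) : ℝ :=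
  ∑ t ∈ Finset.univ.filter (fun t => E s t), Real.exp (Q s t / α)

/-- The policy induced by a soft Q-function:
`P_F(s'|s) = exp(Q(s,s')/α) / F(s)`. -/
noncomputable def PFq {V : Type*} [Fintype V] (E : V → V → Prop) [DecidableRel E]
    (α : ℝ) (Q : V → V → ℝ) (s s' : V) : ℝ :=
  Real.exp (Q s s' / α) / Fq E α Q s

/-- The soft value function induced by a soft Q-function:
`V_Q(s) = α log Σ_{s'' ∈ Ch(s)} exp(Q(s,s'')/α)` for `s ∈ S`, and `V_Q(s_f) = 0`. -/
noncomputable def VQ {V : Type*} [Fintype V] [DecidableEq V]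
    (E : V → V → Prop) [DecidableRel E] (sf : V) (α : ℝ) (Q : V → V → ℝ) (s : V) : ℝ :=
  if s = sf then 0 else α * Real.log (Fq E α Q s)

section SoftQ

variable {V : Type*} [Fintype V] {E : V → V → Prop} [DecidableRel E] {α : ℝ} {Q : V → V → ℝ}

theorem Fq_pos {s t : V} (h : E s t) : 0 < Fq E α Q s :=
  Finset.sum_pos (fun _ _ => Real.exp_pos _) ⟨t, Finset.mem_filter.mpr ⟨Finset.mem_univ t, h⟩⟩

theorem log_Fq_mul_PFq {s s' : V} (h : E s s') :
    Real.log (Fq E α Q s * PFq E α Q s s') = Q s s' / α := by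
  rw [PFq, mul_div_cancel₀ _ (Fq_pos h).ne', Real.log_exp]

theorem VQ_of_ne [DecidableEq V] {sf s : V} (hs : s ≠ sf) :
    VQ E sf α Q s = α * Real.log (Fq E α Q s) :=
  if_neg hs

end SoftQ

theorem sql_residual_eq_db_residual_general
    {V : Type*} [Fintype V] [DecidableEq V]
    (E : V → V → Prop) [DecidableRel E] (sf : V)
    -- every non-terminal state has at least one child (all trajectories end at s_f)
    (hchild : ∀ s : V, s ≠ sf → ∃ t : V, E s t)
    (α : ℝ) (hα : 0 < α)
    (PB : V → V → ℝ)
    (hPBpos : ∀ s s' : V, E s s' → s' ≠ sf → 0 < PB s s')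
    -- sparse corrected reward
    (r : V → V → ℝ)
    (hr : ∀ s s' : V, E s s' → s' ≠ sf → r s s' = α * Real.log (PB s s'))
    (Q : V → V → ℝ) :
    ∀ s s' : V, E s s' → s' ≠ sf →
      Q s s' - (r s s' + VQ E sf α Q s')
        = α * (Real.log (Fq E α Q s * PFq E α Q s s')
            - Real.log (Fq E α Q s' * PB s s')) := by
  intro s s' hE hne
  obtain ⟨t, hE'⟩ := hchild s' hne
  rw [log_Fq_mul_PFq hE, VQ_of_ne hne, hr s s' hE hne,
    Real.log_mul (Fq_pos hE').ne' (hPBpos s s' hE hne).ne', mul_sub, mul_div_cancel₀ _ hα.ne']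
  ring

/-- On a soft MDP with the sparse corrected reward, for every edge
`s → s'` with `s' ∈ S`, the SQL residual equals `α` times the DB residual, under the
correspondence `F(s) = Σ_{s''} exp(Q(s,s'')/α)`, `P_F(s'|s) = exp(Q(s,s')/α)/F(s)`. -/
theorem sql_residual_eq_db_residual
    {V : Type*} [Fintype V] [DecidableEq V]
    (E : V → V → Prop) [DecidableRel E] (s0 sf : V)
    (hacyc : ∀ v : V, ¬ Relation.TransGen E v v)
    (hsink : ∀ v : V, ¬ E sf v)
    (hreach : ∀ v : V, Relation.ReflTransGen E s0 v)
    -- every non-terminal state has at least one child (all trajectories end at s_f)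
    (hchild : ∀ s : V, s ≠ sf → ∃ t : V, E s t)
    (α : ℝ) (hα : 0 < α)
    (En : V → ℝ)
    (PB : V → V → ℝ)
    (hPBpos : ∀ s s' : V, E s s' → s' ≠ sf → 0 < PB s s')
    (hPBsum : ∀ s' : V, s' ≠ sf → s' ≠ s0 →
      ∑ s ∈ Finset.univ.filter (fun s => E s s'), PB s s' = 1)
    -- sparse corrected reward
    (r : V → V → ℝ)
    (hr : ∀ s s' : V, E s s' → s' ≠ sf → r s s' = α * Real.log (PB s s'))
    (hrf : ∀ x : V, E x sf → r x sf = -En x)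
    (Q : V → V → ℝ) :
    ∀ s s' : V, E s s' → s' ≠ sf →
      Q s s' - (r s s' + VQ E sf α Q s')
        = α * (Real.log (Fq E α Q s * PFq E α Q s s')
            - Real.log (Fq E α Q s' * PB s s')) :=
  sql_residual_eq_db_residual_general E sf hchild α hα PB hPBpos r hr Q
end

section
/- Assume every state of S has an edge to s_f and that r(s, s_f) = 0 for all s ∈ S. Let Q be a real-valued function on the edges of G with Q(s, s_f) = 0 for all s ∈ S, and define π(s'|s) = exp((Q(s, s') − V_Q(s))/α). Then for every edge s → s' with s' ∈ S, the Soft Q-Learning residual can be written purely in terms of the policy π: Q(s, s') − (r(s, s') + V_Q(s')) = α (log π(s'|s) − log π(s_f|s) + log π(s_f|s')) − r(s, s'). -/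
theorem Real.mul_log_exp_div {α : ℝ} (hα : α ≠ 0) (x : ℝ) :
    α * Real.log (Real.exp (x / α)) = x := by
  rw [Real.log_exp, mul_div_cancel₀ x hα]

theorem sql_residual_policy_parametrization_general
    {V : Type*} [Fintype V] [DecidableEq V]
    (E : V → V → Prop) [DecidableRel E] (sf : V)
    (hsink : ∀ v : V, ¬ E sf v)
    (α : ℝ) (hα : 0 < α)
    (r : V → V → ℝ)
    (Q : V → V → ℝ)
    (hQf : ∀ s : V, s ≠ sf → Q s sf = 0) :
    ∀ s s' : V, E s s' → s' ≠ sf →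
      Q s s' - (r s s' + VQ E sf α Q s')
        = α * (Real.log (Real.exp ((Q s s' - VQ E sf α Q s) / α))
            - Real.log (Real.exp ((Q s sf - VQ E sf α Q s) / α))
            + Real.log (Real.exp ((Q s' sf - VQ E sf α Q s') / α)))
          - r s s' := by
  intro s s' hE hs'
  have hs : s ≠ sf := fun h => hsink s' (h ▸ hE)
  rw [mul_add, mul_sub, Real.mul_log_exp_div hα.ne', Real.mul_log_exp_div hα.ne',
    Real.mul_log_exp_div hα.ne', hQf s hs, hQf s' hs']
  ring

/-- If every state of `S` has an edge to `s_f`, `r(s,s_f) = 0` and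
`Q(s,s_f) = 0` for all `s ∈ S`, then for every edge `s → s'` with `s' ∈ S`, the SQL
residual can be written purely in terms of the policy
`π(s'|s) = exp((Q(s,s') - V_Q(s))/α)`:
`Q(s,s') - (r(s,s') + V_Q(s')) = α (log π(s'|s) - log π(s_f|s) + log π(s_f|s')) - r(s,s')`. -/
theorem sql_residual_policy_parametrization
    {V : Type*} [Fintype V] [DecidableEq V]
    (E : V → V → Prop) [DecidableRel E] (s0 sf : V)
    (hacyc : ∀ v : V, ¬ Relation.TransGen E v v)
    (hsink : ∀ v : V, ¬ E sf v)
    (hreach : ∀ v : V, Relation.ReflTransGen E s0 v)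
    (α : ℝ) (hα : 0 < α)
    -- every state of S has an edge to s_f, and the terminal reward vanishes
    (hterm : ∀ s : V, s ≠ sf → E s sf)
    (r : V → V → ℝ)
    (hrf : ∀ s : V, s ≠ sf → r s sf = 0)
    (Q : V → V → ℝ)
    (hQf : ∀ s : V, s ≠ sf → Q s sf = 0) :
    ∀ s s' : V, E s s' → s' ≠ sf →
      Q s s' - (r s s' + VQ E sf α Q s')
        = α * (Real.log (Real.exp ((Q s s' - VQ E sf α Q s) / α))
            - Real.log (Real.exp ((Q s sf - VQ E sf α Q s) / α))
            + Real.log (Real.exp ((Q s' sf - VQ E sf α Q s') / α)))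
          - r s s' :=
  sql_residual_policy_parametrization_general E sf hsink α hα r Q hQf
end

section
/- Assume every state of S has an edge to s_f (all states are terminating, S ≡ X), and let the reward be r(s, s') = E(s) − E(s') + α log P_B(s|s') for every edge s → s' with s' ∈ S, and r(s, s_f) = 0. Then for every edge s → s' with s' ∈ S, the π-SQL residual equals −α times the Modified Detailed Balance residual: α (log P_F(s'|s) − log P_F(s_f|s) + log P_F(s_f|s')) − r(s, s') = −α [log(exp(−E(s')/α) P_B(s|s') P_F(s_f|s)) − log(exp(−E(s)/α) P_F(s'|s) P_F(s_f|s'))]. -/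
/-! Expanding the logarithms of the products, the factors `exp (-E/α)` contribute `-E/α`, which
the prefactor `-α` turns into the energy difference `E(s) - E(s')` of the reward; the remaining
`log P_B` term matches `α log P_B(s|s')`, and the forward-policy logarithms agree term by term. -/

open Real

lemma log_exp_mul_mul (x : ℝ) {a b : ℝ} (ha : 0 < a) (hb : 0 < b) :
    log (exp x * a * b) = x + log a + log b := by
  rw [log_mul (by positivity) hb.ne', log_mul (exp_pos x).ne' ha.ne', log_exp]

lemma sql_residual_eq_neg_mul_mdb_residual {α : ℝ} (hα : α ≠ 0) (e e' : ℝ)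
    {pF pFf pF'f pB : ℝ} (hpF : 0 < pF) (hpFf : 0 < pFf) (hpF'f : 0 < pF'f) (hpB : 0 < pB) :
    α * (log pF - log pFf + log pF'f) - (e - e' + α * log pB)
      = -α * (log (exp (-e' / α) * pB * pFf) - log (exp (-e / α) * pF * pF'f)) := by
  rw [log_exp_mul_mul _ hpB hpFf, log_exp_mul_mul _ hpF hpF'f]
  field_simp
  ring

theorem pi_sql_residual_eq_modified_db_residual_general
    {V : Type*}
    (E : V → V → Prop) (sf : V)
    (hsink : ∀ v : V, ¬ E sf v)
    (α : ℝ) (hα : 0 < α)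
    (En : V → ℝ)
    (PB : V → V → ℝ)
    (hPBpos : ∀ s s' : V, E s s' → s' ≠ sf → 0 < PB s s')
    (PF : V → V → ℝ) (hPFpos : ∀ s s' : V, E s s' → 0 < PF s s')
    -- all states are terminating: S ≡ X
    (hterm : ∀ s : V, s ≠ sf → E s sf)
    -- corrected reward with reshaping by the energy
    (r : V → V → ℝ)
    (hr : ∀ s s' : V, E s s' → s' ≠ sf →
      r s s' = En s - En s' + α * Real.log (PB s s')) :
    ∀ s s' : V, E s s' → s' ≠ sf →
      -- Δ_{π-SQL}(s,s') = -α · Δ_{M-DB}(s,s')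
      α * (Real.log (PF s s') - Real.log (PF s sf) + Real.log (PF s' sf)) - r s s'
        = -α * (Real.log (Real.exp (-En s' / α) * PB s s' * PF s sf)
            - Real.log (Real.exp (-En s / α) * PF s s' * PF s' sf)) := by
  intro s s' hE hs'
  have hs : s ≠ sf := by
    rintro rfl
    exact hsink s' hE
  rw [hr s s' hE hs']
  exact sql_residual_eq_neg_mul_mdb_residual hα.ne' _ _ (hPFpos s s' hE)
    (hPFpos s sf (hterm s hs)) (hPFpos s' sf (hterm s' hs')) (hPBpos s s' hE hs')

/-- Assume every state of `S` has an edge to `s_f` (all states are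
terminating) and the reward is `r(s,s') = E(s) - E(s') + α log P_B(s|s')` on edges with
`s' ∈ S`, and `r(s,s_f) = 0`. Then for every such edge the π-SQL residual equals `-α`
times the Modified Detailed Balance residual. -/
theorem pi_sql_residual_eq_modified_db_residual
    {V : Type*} [Fintype V] [DecidableEq V]
    (E : V → V → Prop) [DecidableRel E] (s0 sf : V)
    (hacyc : ∀ v : V, ¬ Relation.TransGen E v v)
    (hsink : ∀ v : V, ¬ E sf v)
    (hreach : ∀ v : V, Relation.ReflTransGen E s0 v)
    (α : ℝ) (hα : 0 < α)
    (En : V → ℝ)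
    (PB : V → V → ℝ)
    (hPBpos : ∀ s s' : V, E s s' → s' ≠ sf → 0 < PB s s')
    (hPBsum : ∀ s' : V, s' ≠ sf → s' ≠ s0 →
      ∑ s ∈ Finset.univ.filter (fun s => E s s'), PB s s' = 1)
    (PF : V → V → ℝ) (hPFpos : ∀ s s' : V, E s s' → 0 < PF s s')
    -- all states are terminating: S ≡ X
    (hterm : ∀ s : V, s ≠ sf → E s sf)
    -- corrected reward with reshaping by the energy
    (r : V → V → ℝ)
    (hr : ∀ s s' : V, E s s' → s' ≠ sf →
      r s s' = En s - En s' + α * Real.log (PB s s'))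
    (hrf : ∀ s : V, s ≠ sf → r s sf = 0) :
    ∀ s s' : V, E s s' → s' ≠ sf →
      -- Δ_{π-SQL}(s,s') = -α · Δ_{M-DB}(s,s')
      α * (Real.log (PF s s') - Real.log (PF s sf) + Real.log (PF s' sf)) - r s s'
        = -α * (Real.log (Real.exp (-En s' / α) * PB s s' * PF s sf)
            - Real.log (Real.exp (-En s / α) * PF s s' * PF s' sf)) :=
  pi_sql_residual_eq_modified_db_residual_general E sf hsink α hα En PB hPBpos PF hPFpos hterm r hr
end

section
/- Assume every state of S has an edge to s_f (all states are terminating, S ≡ X), and let the reward be r(s, s') = E(s) − E(s') + α log P_B(s|s') for edges with s' ∈ S and r(s, s_f) = 0. Let π_b be a probability distribution over the edges s → s' of G with s' ∈ S, and define L_{π-SQL} = (1/2) Σ π_b(s, s') Δ_{π-SQL}(s, s')² and L_{M-DB} = (1/2) Σ π_b(s, s') Δ_{M-DB}(s, s')². Then the Soft Q-Learning objective with policy parametrization is proportional to the Modified Detailed Balance objective: L_{π-SQL} = α² L_{M-DB}, with the identification π_θ(s'|s) = P_F(s'|s). -/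
/-!
Once the logarithms of the products in `Δ_{M-DB}` are split and the reward is substituted,
the two residuals agree edge by edge up to the factor `-α`: `Δ_{π-SQL} = -α Δ_{M-DB}`.
Squaring and averaging against `π_b` then gives the factor `α²` between the losses.
-/

/-- The π-SQL residual of an edge `s → s'` with `s' ∈ S`:
`Δ_{π-SQL}(s,s') = α (log P_F(s'|s) - log P_F(s_f|s) + log P_F(s_f|s')) - r(s,s')`. -/
noncomputable def deltaPiSQL {V : Type*} (sf : V) (α : ℝ)
    (PF : V → V → ℝ) (r : V → V → ℝ) (s s' : V) : ℝ :=
  α * (Real.log (PF s s') - Real.log (PF s sf) + Real.log (PF s' sf)) - r s s'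

/-- The Modified Detailed Balance residual of an edge `s → s'` with `s' ∈ S`:
`Δ_{M-DB}(s,s') = log(exp(-E(s')/α) P_B(s|s') P_F(s_f|s))
                 - log(exp(-E(s)/α) P_F(s'|s) P_F(s_f|s'))`. -/
noncomputable def deltaMDB {V : Type*} (sf : V) (α : ℝ) (En : V → ℝ)
    (PB PF : V → V → ℝ) (s s' : V) : ℝ :=
  Real.log (Real.exp (-En s' / α) * PB s s' * PF s sf)
    - Real.log (Real.exp (-En s / α) * PF s s' * PF s' sf)

open Real

theorem deltaPiSQL_eq_neg_mul_deltaMDB {V : Type*} (sf : V) {α : ℝ} (hα : α ≠ 0)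
    (En : V → ℝ) (PB PF r : V → V → ℝ) {s s' : V}
    (hPB : PB s s' ≠ 0) (hPF : PF s s' ≠ 0) (hPFs : PF s sf ≠ 0) (hPFs' : PF s' sf ≠ 0)
    (hr : r s s' = En s - En s' + α * log (PB s s')) :
    deltaPiSQL sf α PF r s s' = -(α * deltaMDB sf α En PB PF s s') := by
  rw [deltaPiSQL, deltaMDB, hr,
    log_mul (mul_ne_zero (exp_ne_zero _) hPB) hPFs, log_mul (exp_ne_zero _) hPB,
    log_mul (mul_ne_zero (exp_ne_zero _) hPF) hPFs', log_mul (exp_ne_zero _) hPF,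
    log_exp, log_exp]
  field_simp
  ring

theorem sum_mul_sq_eq_sq_mul_sum_mul_sq {ι κ : Type*} [Fintype ι] [Fintype κ]
    (w f g : ι → κ → ℝ) (c : ℝ) (h : ∀ i j, w i j ≠ 0 → f i j = -(c * g i j)) :
    ∑ i, ∑ j, w i j * f i j ^ 2 = c ^ 2 * ∑ i, ∑ j, w i j * g i j ^ 2 := by
  simp only [Finset.mul_sum]
  refine Finset.sum_congr rfl fun i _ => Finset.sum_congr rfl fun j _ => ?_
  by_cases hw : w i j = 0
  · simp [hw]
  · rw [h i j hw]
    ring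

theorem pi_sql_loss_eq_modified_db_loss_general
    {V : Type*} [Fintype V]
    (E : V → V → Prop) (sf : V)
    (hsink : ∀ v : V, ¬ E sf v)
    (α : ℝ) (hα : 0 < α)
    (En : V → ℝ)
    (PB : V → V → ℝ)
    (hPBpos : ∀ s s' : V, E s s' → s' ≠ sf → 0 < PB s s')
    (PF : V → V → ℝ) (hPFpos : ∀ s s' : V, E s s' → 0 < PF s s')
    (hterm : ∀ s : V, s ≠ sf → E s sf)
    (r : V → V → ℝ)
    (hr : ∀ s s' : V, E s s' → s' ≠ sf →
      r s s' = En s - En s' + α * Real.log (PB s s'))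
    -- π_b : a probability distribution over the edges s → s' with s' ∈ S
    (πb : V → V → ℝ)
    (hπb_supp : ∀ s s' : V, πb s s' ≠ 0 → E s s' ∧ s' ≠ sf) :
    (1 / 2) * (∑ s : V, ∑ s' : V, πb s s' * (deltaPiSQL sf α PF r s s') ^ 2)
      = α ^ 2 * ((1 / 2) *
          ∑ s : V, ∑ s' : V, πb s s' * (deltaMDB sf α En PB PF s s') ^ 2) := by
  rw [mul_left_comm, sum_mul_sq_eq_sq_mul_sum_mul_sq _ _ _ α ?_]
  intro s s' hπ
  obtain ⟨hE, hs'⟩ := hπb_supp s s' hπ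
  have hs : s ≠ sf := by
    rintro rfl
    exact hsink s' hE
  exact deltaPiSQL_eq_neg_mul_deltaMDB sf hα.ne' En PB PF r
    (hPBpos s s' hE hs').ne' (hPFpos s s' hE).ne' (hPFpos s sf (hterm s hs)).ne'
    (hPFpos s' sf (hterm s' hs')).ne' (hr s s' hE hs')

/-- Assume all states are terminating (`S ≡ X`) and the reward is
`r(s,s') = E(s) - E(s') + α log P_B(s|s')` on edges with `s' ∈ S`, `r(s,s_f) = 0`. For any
probability distribution `π_b` over the edges `s → s'` with `s' ∈ S`, the Soft Q-Learning
objective with policy parametrization is proportional to the Modified Detailed Balance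
objective: `L_{π-SQL} = α² L_{M-DB}`, with the identification `π_θ = P_F`. -/
theorem pi_sql_loss_eq_modified_db_loss
    {V : Type*} [Fintype V] [DecidableEq V]
    (E : V → V → Prop) [DecidableRel E] (s0 sf : V)
    (hacyc : ∀ v : V, ¬ Relation.TransGen E v v)
    (hsink : ∀ v : V, ¬ E sf v)
    (hreach : ∀ v : V, Relation.ReflTransGen E s0 v)
    (α : ℝ) (hα : 0 < α)
    (En : V → ℝ)
    (PB : V → V → ℝ)
    (hPBpos : ∀ s s' : V, E s s' → s' ≠ sf → 0 < PB s s')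
    (hPBsum : ∀ s' : V, s' ≠ sf → s' ≠ s0 →
      ∑ s ∈ Finset.univ.filter (fun s => E s s'), PB s s' = 1)
    (PF : V → V → ℝ) (hPFpos : ∀ s s' : V, E s s' → 0 < PF s s')
    (hterm : ∀ s : V, s ≠ sf → E s sf)
    (r : V → V → ℝ)
    (hr : ∀ s s' : V, E s s' → s' ≠ sf →
      r s s' = En s - En s' + α * Real.log (PB s s'))
    (hrf : ∀ s : V, s ≠ sf → r s sf = 0)
    -- π_b : a probability distribution over the edges s → s' with s' ∈ S
    (πb : V → V → ℝ)
    (hπb_nonneg : ∀ s s' : V, 0 ≤ πb s s')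
    (hπb_supp : ∀ s s' : V, πb s s' ≠ 0 → E s s' ∧ s' ≠ sf)
    (hπb_sum : ∑ s : V, ∑ s' : V, πb s s' = 1) :
    (1 / 2) * (∑ s : V, ∑ s' : V, πb s s' * (deltaPiSQL sf α PF r s s') ^ 2)
      = α ^ 2 * ((1 / 2) *
          ∑ s : V, ∑ s' : V, πb s s' * (deltaMDB sf α En PB PF s s') ^ 2) :=
  pi_sql_loss_eq_modified_db_loss_general E sf hsink α hα En PB hPBpos PF hPFpos hterm r hr πb
    hπb_supp
end
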